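/- Let α ≥ 1 and let G be a simple graph on n vertices whose edge set can be partitioned into α sets each forming a forest. Let r be a real number with r ≥ 10(α²n)^{1/3} and set s = r/10. Call a vertex small if its degree is at most r, large if its degree is at least αn/s, and medium otherwise. Suppose an orientation of the edges of G satisfies: (i) every edge directed away from a large vertex is directed toward a large vertex, and (ii) every edge directed away from a medium vertex is directed toward a vertex that is large, or toward a medium vertex having at least s medium neighbors. Then every vertex of G has out-degree at most r. -/

import Mathlib

/-!
Since `G` is a union of `α` forests, so is every induced subgraph, hence `G[X]` has at
most `α|X|` edges for every vertex set `X`. Counting degrees, there are at most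
`2αn / (αn/s) = 2s` large vertices and at most `2αn/r` medium ones; the medium vertices span
at most `α · 2αn/r` edges, so at most `4α²n/(rs) = 40α²n/r² ≤ r/25` of them have `s` medium
neighbours. An out-edge of a large vertex ends at one of the large vertices, an out-edge of a
medium vertex at one of these `2s + r/25 ≤ r` vertices, and a small vertex has degree at
most `r`.
-/

/-- `o` is an orientation of the graph `G`: it assigns to each edge of `G` one of its two
endpoints as head. -/
def IsOrientation {V : Type*} (G : SimpleGraph V) (o : Sym2 V → V) : Prop :=
  ∀ e ∈ G.edgeSet, o e ∈ e

/-- The out-degree of a vertex `v` under an orientation `o` of `G`: the number of edges of `G`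
incident to `v` whose head is not `v`. -/
def outDegree {V : Type*} [Fintype V] [DecidableEq V] (G : SimpleGraph V) [DecidableRel G.Adj]
    (o : Sym2 V → V) (v : V) : ℕ :=
  (G.edgeFinset.filter (fun e => v ∈ e ∧ o e ≠ v)).card

/-- The subgraph of `G` consisting of the edges with label `i` under the edge-labeling `c`. -/
def labelGraph {V : Type*} {k : ℕ} (G : SimpleGraph V) (c : Sym2 V → Fin k) (i : Fin k) :
    SimpleGraph V where
  Adj u v := G.Adj u v ∧ c s(u, v) = i
  symm := by
    constructor
    intro u v ⟨h1, h2⟩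
    exact ⟨h1.symm, by rwa [Sym2.eq_swap]⟩
  loopless := ⟨fun v ⟨h, _⟩ => h.ne rfl⟩

/-- A vertex is *large* if its degree is at least `αn/s`. -/
def IsLargeVx {V : Type*} [Fintype V] [DecidableEq V] (G : SimpleGraph V) [DecidableRel G.Adj]
    (α n : ℕ) (s : ℝ) (v : V) : Prop :=
  (α : ℝ) * n / s ≤ (G.degree v : ℝ)

/-- A vertex is *medium* if its degree is more than `r` but less than `αn/s`
(i.e. it is neither small nor large). -/
def IsMediumVx {V : Type*} [Fintype V] [DecidableEq V] (G : SimpleGraph V) [DecidableRel G.Adj]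
    (α n : ℕ) (r s : ℝ) (v : V) : Prop :=
  r < (G.degree v : ℝ) ∧ (G.degree v : ℝ) < (α : ℝ) * n / s

open Finset

namespace SimpleGraph

variable {V : Type*} [Fintype V] {G : SimpleGraph V} [DecidableRel G.Adj]

theorem IsAcyclic.card_edgeFinset_le_card (hG : G.IsAcyclic) :
    #G.edgeFinset ≤ Fintype.card V := by
  cases isEmpty_or_nonempty V
  · simp [card_eq_zero, eq_empty_iff_forall_notMem]
  obtain ⟨T, hGT, -, hT⟩ := connected_top.exists_isTree_le_of_le_of_isAcyclic le_top hG
  classical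
  calc #G.edgeFinset ≤ #T.edgeFinset := card_le_card (edgeFinset_mono hGT)
    _ ≤ Fintype.card V := by rw [← hT.card_edgeFinset]; omega

theorem degree_induce (s : Set V) [DecidablePred (· ∈ s)] (x : s) :
    (G.induce s).degree x = #{w ∈ G.neighborFinset x | w ∈ s} := by
  rw [← card_neighborFinset_eq_degree, ← card_map (Function.Embedding.subtype _)]
  congr 1
  ext w
  simp

theorem card_mul_le_two_mul_card_edgeFinset (T : Finset V) {d : ℝ}
    (hT : ∀ v ∈ T, d ≤ G.degree v) : #T * d ≤ 2 * #G.edgeFinset := by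
  calc #T * d ≤ ∑ v ∈ T, (G.degree v : ℝ) := by
        simpa using card_nsmul_le_sum T (fun v => (G.degree v : ℝ)) d hT
    _ ≤ ∑ v, (G.degree v : ℝ) :=
        sum_le_sum_of_subset_of_nonneg (subset_univ T) fun _ _ _ => by positivity
    _ = 2 * #G.edgeFinset := by exact_mod_cast G.sum_degrees_eq_twice_card_edges

end SimpleGraph

open SimpleGraph

section ForestCover

variable {V : Type*} [Fintype V] {k : ℕ} {G : SimpleGraph V} [DecidableRel G.Adj]
  {c : Sym2 V → Fin k}

theorem card_edgeFinset_le_of_isAcyclic_labelGraph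
    (hc : ∀ i, (labelGraph G c i).IsAcyclic) :
    #G.edgeFinset ≤ k * Fintype.card V := by
  classical
  have hcover : G.edgeFinset ⊆ univ.biUnion fun i => (labelGraph G c i).edgeFinset := by
    intro e he
    induction e using Sym2.ind with
    | _ u v =>
      exact mem_biUnion.2 ⟨c s(u, v), mem_univ _, mem_edgeFinset.2 ⟨mem_edgeFinset.1 he, rfl⟩⟩
  calc #G.edgeFinset ≤ ∑ i, #(labelGraph G c i).edgeFinset :=
        (card_le_card hcover).trans card_biUnion_le
    _ ≤ ∑ _i : Fin k, Fintype.card V := sum_le_sum fun i _ => (hc i).card_edgeFinset_le_card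
    _ = k * Fintype.card V := by simp

theorem sum_card_neighborFinset_filter_le (hc : ∀ i, (labelGraph G c i).IsAcyclic)
    (P : V → Prop) [DecidablePred P] :
    ∑ u with P u, #{w ∈ G.neighborFinset u | P w} ≤ 2 * (k * #{u | P u}) := by
  let s : Set V := {v | P v}
  -- `labelGraph (G.induce s) (c ∘ Sym2.map (↑)) i` is defeq to `(labelGraph G c i).induce s`
  have hinduce : #(G.induce s).edgeFinset ≤ k * #{u | P u} := by
    have := card_edgeFinset_le_of_isAcyclic_labelGraph (G := G.induce s)
      (c := c ∘ Sym2.map Subtype.val) fun i => (hc i).induce s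
    simpa [s, Fintype.card_subtype] using this
  calc ∑ u with P u, #{w ∈ G.neighborFinset u | P w}
      = ∑ x : s, (G.induce s).degree x := by
        rw [sum_subtype (p := (· ∈ s)) _ fun v => by simp [s]]
        exact sum_congr rfl fun x _ => (degree_induce s x).symm
    _ = 2 * #(G.induce s).edgeFinset := sum_degrees_eq_twice_card_edges _
    _ ≤ 2 * (k * #{u | P u}) := by omega

theorem card_filter_le_card_neighborFinset_filter_mul_le
    (hc : ∀ i, (labelGraph G c i).IsAcyclic) (P : V → Prop) [DecidablePred P] (t : ℝ) :
    (#{u | P u ∧ t ≤ #{w ∈ G.neighborFinset u | P w}} : ℝ) * t ≤ 2 * (k * #{u | P u}) := by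
  calc (#{u | P u ∧ t ≤ #{w ∈ G.neighborFinset u | P w}} : ℝ) * t
      ≤ ∑ u with P u ∧ t ≤ #{w ∈ G.neighborFinset u | P w},
          (#{w ∈ G.neighborFinset u | P w} : ℝ) := by
        simpa using card_nsmul_le_sum _ _ t fun u hu => (mem_filter.1 hu).2.2
    _ ≤ ∑ u with P u, (#{w ∈ G.neighborFinset u | P w} : ℝ) :=
        sum_le_sum_of_subset_of_nonneg
          (fun _ hu => mem_filter.2 ⟨mem_univ _, (mem_filter.1 hu).2.1⟩)
          fun _ _ _ => by positivity
    _ ≤ 2 * (k * #{u | P u}) := by exact_mod_cast sum_card_neighborFinset_filter_le hc P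

end ForestCover

section Orientation

variable {V : Type*} [Fintype V] [DecidableEq V] {G : SimpleGraph V} [DecidableRel G.Adj]
  {o : Sym2 V → V}

theorem outDegree_le_degree (v : V) : outDegree G o v ≤ G.degree v := by
  rw [← card_incidenceFinset_eq_degree]
  refine card_le_card fun e he => ?_
  rw [mem_filter, mem_edgeFinset] at he
  exact (mem_incidenceFinset ..).2 ⟨he.1, he.2.1⟩

theorem outDegree_le_card_of_forall_head_mem (ho : IsOrientation G o) {v : V} {T : Finset V}
    (hT : ∀ w, G.Adj v w → o s(v, w) = w → w ∈ T) : outDegree G o v ≤ #T := by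
  have hedge : ∀ e ∈ G.edgeFinset.filter (fun e => v ∈ e ∧ o e ≠ v), e = s(v, o e) := by
    intro e he
    rw [mem_filter, mem_edgeFinset] at he
    exact (Sym2.mem_and_mem_iff (Ne.symm he.2.2)).mp ⟨he.2.1, ho e he.1⟩
  refine card_le_card_of_injOn o (fun e he => ?_) fun e₁ he₁ e₂ he₂ h => ?_
  · have he' := hedge e he
    rw [coe_filter, Set.mem_ofPred_eq, mem_edgeFinset, he'] at he
    exact hT _ he.1 (he' ▸ rfl)
  · rw [hedge e₁ he₁, hedge e₂ he₂, h]

end Orientation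

section VertexClasses

open scoped Classical

variable {V : Type*} [Fintype V] [DecidableEq V] {G : SimpleGraph V} [DecidableRel G.Adj]
  {α n : ℕ} {r s : ℝ}

theorem card_isLargeVx_le (hE : (#G.edgeFinset : ℝ) ≤ α * n) (hαn : 0 < (α * n : ℝ))
    (hs : 0 < s) : (#{v | IsLargeVx G α n s v} : ℝ) ≤ 2 * s := by
  have h := card_mul_le_two_mul_card_edgeFinset {v | IsLargeVx G α n s v}
    fun v hv => (mem_filter.1 hv).2
  rw [mul_div_assoc', div_le_iff₀ hs] at h
  nlinarith

theorem card_isMediumVx_mul_le (hE : (#G.edgeFinset : ℝ) ≤ α * n) :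
    (#{v | IsMediumVx G α n r s v} : ℝ) * r ≤ 2 * (α * n) := by
  have h := card_mul_le_two_mul_card_edgeFinset {v | IsMediumVx G α n r s v}
    fun v hv => (mem_filter.1 hv).2.1.le
  linarith

theorem card_isMediumVx_with_many_medium_neighbors_le {c : Sym2 V → Fin α}
    (hc : ∀ i, (labelGraph G c i).IsAcyclic) (hE : (#G.edgeFinset : ℝ) ≤ α * n) (hr : 0 < r)
    (hr3 : 1000 * ((α : ℝ) ^ 2 * n) ≤ r ^ 3) (hs : s = r / 10) :
    (#{v | IsMediumVx G α n r s v ∧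
        s ≤ #{w ∈ G.neighborFinset v | IsMediumVx G α n r s w}} : ℝ) ≤ r / 25 := by
  set M : Finset V :=
    {v | IsMediumVx G α n r s v ∧ s ≤ #{w ∈ G.neighborFinset v | IsMediumVx G α n r s w}}
  have hM : (#M : ℝ) * s ≤ 2 * (α * #{v | IsMediumVx G α n r s v}) :=
    card_filter_le_card_neighborFinset_filter_mul_le hc (IsMediumVx G α n r s) s
  have hS := card_isMediumVx_mul_le (r := r) (s := s) hE
  have hsr : (#M : ℝ) * s * r = #M * r ^ 2 / 10 := by rw [hs]; ring
  have hMr : (#M : ℝ) * r ^ 2 ≤ r / 25 * r ^ 2 := by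
    nlinarith [mul_le_mul_of_nonneg_right hM hr.le,
      mul_le_mul_of_nonneg_left hS (by positivity : (0 : ℝ) ≤ 2 * α)]
  exact le_of_mul_le_mul_right hMr (by positivity)

end VertexClasses

theorem pow_three_mul_le_pow_three_of_mul_rpow_le {c x r : ℝ} (hc : 0 ≤ c) (hx : 0 ≤ x)
    (h : c * x ^ (1 / 3 : ℝ) ≤ r) : c ^ 3 * x ≤ r ^ 3 := by
  calc c ^ 3 * x = (c * x ^ (1 / 3 : ℝ)) ^ 3 := by
        rw [mul_pow, ← Real.rpow_natCast (x ^ _), ← Real.rpow_mul hx]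
        simp
    _ ≤ r ^ 3 := by gcongr

open scoped Classical in
/-- Let `α ≥ 1` and let `G` be a simple graph on `n` vertices whose edge set
partitions into `α` forests. Let `r ≥ 10(α²n)^{1/3}` and `s = r/10`. Suppose an orientation of
the edges of `G` satisfies: (i) every edge directed away from a large vertex is directed toward
a large vertex, and (ii) every edge directed away from a medium vertex is directed toward a
vertex that is large, or toward a medium vertex having at least `s` medium neighbors. Then every
vertex of `G` has out-degree at most `r`. -/
theorem stmt6 {V : Type*} [Fintype V] [DecidableEq V] (G : SimpleGraph V) [DecidableRel G.Adj]
    (n α : ℕ) (hα : 1 ≤ α) (hcard : Fintype.card V = n)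
    (c : Sym2 V → Fin α) (hforest : ∀ i : Fin α, (labelGraph G c i).IsAcyclic)
    (r s : ℝ) (hr : 10 * ((α : ℝ) ^ 2 * n) ^ ((1 : ℝ) / 3) ≤ r) (hs : s = r / 10)
    (o : Sym2 V → V) (ho : IsOrientation G o)
    (hlarge : ∀ u v : V, G.Adj u v → o s(u, v) = v →
      IsLargeVx G α n s u → IsLargeVx G α n s v)
    (hmedium : ∀ u v : V, G.Adj u v → o s(u, v) = v → IsMediumVx G α n r s u →
      (IsLargeVx G α n s v ∨ (IsMediumVx G α n r s v ∧
        s ≤ (((G.neighborFinset v).filter (fun w => IsMediumVx G α n r s w)).card : ℝ)))) :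
    ∀ v : V, (outDegree G o v : ℝ) ≤ r := by
  intro v
  have hn : 1 ≤ n := hcard ▸ Fintype.card_pos_iff.2 ⟨v⟩
  have hαn : (1 : ℝ) ≤ α * n := by exact_mod_cast Nat.mul_le_mul hα hn
  have hr3 : 1000 * ((α : ℝ) ^ 2 * n) ≤ r ^ 3 := by
    simpa [show (10 : ℝ) ^ 3 = 1000 by norm_num] using
      pow_three_mul_le_pow_three_of_mul_rpow_le (by norm_num) (by positivity) hr
  have hr0 : 0 < r :=
    (Odd.pow_pos_iff (n := 3) (by decide)).1 (by nlinarith [(by exact_mod_cast hα : (1 : ℝ) ≤ α)])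
  have hE : (#G.edgeFinset : ℝ) ≤ α * n := by
    exact_mod_cast hcard ▸ card_edgeFinset_le_of_isAcyclic_labelGraph hforest
  set L : Finset V := {w | IsLargeVx G α n s w}
  set M : Finset V :=
    {w | IsMediumVx G α n r s w ∧ s ≤ #{x ∈ G.neighborFinset w | IsMediumVx G α n r s x}}
  have hL : (#L : ℝ) ≤ 2 * s := card_isLargeVx_le hE (by linarith) (by linarith)
  have hM : (#M : ℝ) ≤ r / 25 :=
    card_isMediumVx_with_many_medium_neighbors_le hforest hE hr0 hr3 hs
  rcases le_or_gt (G.degree v : ℝ) r with hsmall | hbig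
  · exact le_trans (by exact_mod_cast outDegree_le_degree v) hsmall
  by_cases hv : IsLargeVx G α n s v
  · have hout : outDegree G o v ≤ #L := outDegree_le_card_of_forall_head_mem ho
      fun w hvw hw => mem_filter.2 ⟨mem_univ _, hlarge v w hvw hw hv⟩
    have : (outDegree G o v : ℝ) ≤ #L := by exact_mod_cast hout
    linarith
  · have hout : outDegree G o v ≤ #(L ∪ M) := outDegree_le_card_of_forall_head_mem ho
      fun w hvw hw => (hmedium v w hvw hw ⟨hbig, not_le.1 hv⟩).elim
        (fun h => mem_union_left _ (mem_filter.2 ⟨mem_univ _, h⟩))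
        (fun h => mem_union_right _ (mem_filter.2 ⟨mem_univ _, h⟩))
    have : (outDegree G o v : ℝ) ≤ #L + #M := by exact_mod_cast hout.trans (card_union_le L M)
    linarith
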